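/- Define B_{k}(x) as the minimum over input sequences in U^k of max{ max_{0 ≤ t ≤ k-1} α^t (h(x_t) + λ_t), α^k B_0(x_k) } with x_0 = x, where B_0 is a CBF satisfying the appropriate tightening condition. Then the safe sets are nested: S_{B_0} ⊆ S_{B_1} ⊆ S_{B_2} ⊆ ..., i.e., B_k(x) ≤ 0 implies B_{k+1}(x) ≤ 0 for all k ≥ 0. -/

import Mathlib

/-!
An input sequence certifying `B_k(x) ≤ 0` keeps every stage `t < k` safe and ends in `S_{B_0}`.
Append at time `k` an input that keeps the state in `S_{B_0}`, which exists because `B_0` is a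
CBF. The new stage term at time `k` is nonpositive by the tightening `h + λ_k ≤ 0` on `S_{B_0}`,
so the extended sequence certifies `B_{k+1}(x) ≤ 0`.
-/

/-- Closed-loop trajectory: x_0 = x, x_{t+1} = f(x_t, u_t). -/
def traj {σ υ : Type*} (f : σ → υ → σ) (x : σ) (u : ℕ → υ) : ℕ → σ
  | 0 => x
  | t + 1 => f (traj f x u t) (u t)

/-- Cost max{ max_{0 ≤ t ≤ k-1} α^t (h(x_t) + λ_t), α^k B_0(x_k) }. -/
noncomputable def reachCostGen {σ υ : Type*} (f : σ → υ → σ) (h B0 : σ → ℝ)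
    (α : ℝ) (lam : ℕ → ℝ) (k : ℕ) (x : σ) (u : ℕ → υ) : ℝ :=
  max (⨆ t : Fin k, α ^ (t : ℕ) * (h (traj f x u t) + lam t))
    (α ^ k * B0 (traj f x u k))

theorem traj_congr {σ υ : Type*} (f : σ → υ → σ) (x : σ) {u v : ℕ → υ} {n : ℕ}
    (huv : ∀ t < n, u t = v t) : ∀ t ≤ n, traj f x u t = traj f x v t
  | 0, _ => rfl
  | t + 1, ht => by
    rw [traj, traj, traj_congr f x huv t (by omega), huv t (by omega)]

theorem reachCostGen_nonpos_iff {σ υ : Type*} (f : σ → υ → σ) (h B0 : σ → ℝ)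
    {α : ℝ} (hα : 0 < α) (lam : ℕ → ℝ) (k : ℕ) (x : σ) (u : ℕ → υ) :
    reachCostGen f h B0 α lam k x u ≤ 0 ↔
      (∀ t < k, h (traj f x u t) + lam t ≤ 0) ∧ B0 (traj f x u k) ≤ 0 := by
  have hpow (n : ℕ) {c : ℝ} : α ^ n * c ≤ 0 ↔ c ≤ 0 := by
    simpa only [mul_zero] using mul_le_mul_iff_of_pos_left (b := c) (c := 0) (pow_pos hα n)
  rw [reachCostGen, max_le_iff, hpow]
  refine and_congr_left' ⟨fun hsup t ht => ?_, fun hstage => Real.iSup_nonpos fun t => ?_⟩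
  · exact (hpow t).1 <| (le_ciSup (Set.finite_range _).bddAbove (⟨t, ht⟩ : Fin k)).trans hsup
  · exact (hpow t).2 (hstage t t.2)

theorem exists_reachCostGen_succ_nonpos {σ υ : Type*} {f : σ → υ → σ} {h : σ → ℝ}
    {U : Set υ} {B0 : σ → ℝ} {α : ℝ} (hα : 0 < α) {lam : ℕ → ℝ} {k : ℕ}
    (htight : ∀ x, B0 x ≤ 0 → h x + lam k ≤ 0)
    (hfeas : ∀ x, B0 x ≤ 0 → ∃ v ∈ U, B0 (f x v) ≤ 0)
    {x : σ} {u : ℕ → υ} (hu : ∀ t, u t ∈ U) (hcost : reachCostGen f h B0 α lam k x u ≤ 0) :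
    ∃ u' : ℕ → υ, (∀ t, u' t ∈ U) ∧ reachCostGen f h B0 α lam (k + 1) x u' ≤ 0 := by
  obtain ⟨hstage, hterminal⟩ := (reachCostGen_nonpos_iff f h B0 hα lam k x u).1 hcost
  obtain ⟨v, hvU, hv⟩ := hfeas _ hterminal
  have hprefix : ∀ t ≤ k, traj f x (Function.update u k v) t = traj f x u t :=
    traj_congr f x fun t ht => Function.update_of_ne ht.ne v u
  refine ⟨Function.update u k v, fun t => ?_, ?_⟩
  · rcases eq_or_ne t k with rfl | ht
    · simpa using hvU
    · simpa [ht] using hu t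
  rw [reachCostGen_nonpos_iff f h B0 hα]
  refine ⟨fun t ht => ?_, ?_⟩
  · rw [hprefix t (by omega)]
    rcases (Nat.lt_succ_iff.1 ht).lt_or_eq with ht | rfl
    · exact hstage t ht
    · exact htight _ hterminal
  · rwa [traj, hprefix k le_rfl, Function.update_self]

theorem reachability_safe_sets_nested_general
    {σ υ : Type*} (f : σ → υ → σ) (h : σ → ℝ) (U : Set υ) (B0 : σ → ℝ)
    (α : ℝ) (hα : 1 ≤ α) (lam : ℕ → ℝ)
    (k : ℕ)
    -- B_0 is a CBF satisfying the appropriate tightening condition: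
    (hSB0_tight : ∀ x, B0 x ≤ 0 → h x + lam k ≤ 0)
    (hSB0_feas : ∀ x, B0 x ≤ 0 → ∃ u ∈ U, B0 (f x u) ≤ 0)
    -- B_k and B_{k+1} are attained minima of the reachability cost:
    (Bk Bk1 : σ → ℝ)
    (hBk_att : ∀ x : σ, ∃ u : ℕ → υ, (∀ t, u t ∈ U) ∧
      Bk x = reachCostGen f h B0 α lam k x u)
    (hBk1_lb : ∀ (x : σ) (u : ℕ → υ), (∀ t, u t ∈ U) →
      Bk1 x ≤ reachCostGen f h B0 α lam (k + 1) x u) :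
    ∀ x, Bk x ≤ 0 → Bk1 x ≤ 0 := by
  intro x hx
  obtain ⟨u, hu, hBk⟩ := hBk_att x
  obtain ⟨u', hu', hcost⟩ :=
    exists_reachCostGen_succ_nonpos (one_pos.trans_le hα) hSB0_tight hSB0_feas hu (hBk ▸ hx)
  exact (hBk1_lb x u' hu').trans hcost

/-- the safe sets produced by the reachability CBF generator are
nested: B_k(x) ≤ 0 implies B_{k+1}(x) ≤ 0, i.e. S_{B_k} ⊆ S_{B_{k+1}}. -/
theorem reachability_safe_sets_nested
    {σ υ : Type*} (f : σ → υ → σ) (h : σ → ℝ) (U : Set υ) (B0 : σ → ℝ)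
    (α : ℝ) (hα : 1 ≤ α) (lam : ℕ → ℝ) (hlam_nonneg : ∀ t, 0 ≤ lam t)
    (hlam_mono : Monotone lam) (k : ℕ) (hk : 1 ≤ k)
    -- B_0 is a CBF satisfying the appropriate tightening condition:
    (hSB0_ne : {x : σ | B0 x ≤ 0}.Nonempty)
    (hSB0_tight : ∀ x, B0 x ≤ 0 → h x + lam k ≤ 0)
    (hSB0_feas : ∀ x, B0 x ≤ 0 → ∃ u ∈ U, B0 (f x u) ≤ 0)
    -- B_k and B_{k+1} are attained minima of the reachability cost:
    (Bk Bk1 : σ → ℝ)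
    (hBk_att : ∀ x : σ, ∃ u : ℕ → υ, (∀ t, u t ∈ U) ∧
      Bk x = reachCostGen f h B0 α lam k x u)
    (hBk_lb : ∀ (x : σ) (u : ℕ → υ), (∀ t, u t ∈ U) →
      Bk x ≤ reachCostGen f h B0 α lam k x u)
    (hBk1_att : ∀ x : σ, ∃ u : ℕ → υ, (∀ t, u t ∈ U) ∧
      Bk1 x = reachCostGen f h B0 α lam (k + 1) x u)
    (hBk1_lb : ∀ (x : σ) (u : ℕ → υ), (∀ t, u t ∈ U) →
      Bk1 x ≤ reachCostGen f h B0 α lam (k + 1) x u) :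
    ∀ x, Bk x ≤ 0 → Bk1 x ≤ 0 :=
  reachability_safe_sets_nested_general f h U B0 α hα lam k hSB0_tight hSB0_feas Bk Bk1 hBk_att
    hBk1_lb
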